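/- arXiv:2208.00535 — 6 statements merged into one kernel-verified Lean document; each statement's English description precedes it below -/
import Mathlib

section
/- Trapezoid identity for multiplicative integrals: if f : [a,b] → ℝ⁺ is differentiable with a < b and (ln f)' is integrable, then √(f(a) f(b)) · exp((1/(a-b)) ∫_a^b ln f(u) du) = exp( ((b-a)/2) ∫_0^1 (2t-1)·(ln f)'((1-t)a + t b) dt ). -/
open Real intervalIntegral

/-- Trapezoid identity for multiplicative integrals. -/
theorem mul_trapezoid_identity (f : ℝ → ℝ) (a b : ℝ) (hab : a < b)
    (hpos : ∀ x ∈ Set.Icc a b, 0 < f x)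
    (hdiff : ∀ x ∈ Set.Icc a b, DifferentiableAt ℝ f x)
    (hint : IntervalIntegrable
      (fun x => deriv (fun y => Real.log (f y)) x) MeasureTheory.volume a b) :
    Real.sqrt (f a * f b) * Real.exp ((1 / (a - b)) * ∫ u in a..b, Real.log (f u)) =
      Real.exp (((b - a) / 2) *
        ∫ t in (0:ℝ)..1, (2 * t - 1) * deriv (fun y => Real.log (f y)) ((1 - t) * a + t * b)) := by
  set g : ℝ → ℝ := fun y => Real.log (f y) with hg
  set g' : ℝ → ℝ := fun x => deriv g x with hg'
  have hba : (0:ℝ) < b - a := by linarith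
  have hmem_a : a ∈ Set.Icc a b := ⟨le_refl a, le_of_lt hab⟩
  have hmem_b : b ∈ Set.Icc a b := ⟨le_of_lt hab, le_refl b⟩
  -- change of variables
  have hsub : (b - a) • (∫ t in (0:ℝ)..1,
      ((2 * ((b - a) * t + a) - a - b) / (b - a)) * g' ((b - a) * t + a)) =
      ∫ u in ((b-a)*0 + a)..((b-a)*1 + a), ((2 * u - a - b) / (b - a)) * g' u := by
    exact intervalIntegral.smul_integral_comp_mul_add
      (fun u => ((2 * u - a - b) / (b - a)) * g' u) (b - a) a
  have hA : ((b-a)*0 + a) = a := by ring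
  have hB : ((b-a)*1 + a) = b := by ring
  rw [hA, hB] at hsub
  have heq1 : (∫ t in (0:ℝ)..1, (2 * t - 1) * g' ((1 - t) * a + t * b)) =
      ∫ t in (0:ℝ)..1, ((2 * ((b - a) * t + a) - a - b) / (b - a)) * g' ((b - a) * t + a) := by
    apply intervalIntegral.integral_congr
    intro t _
    dsimp only
    have h1 : (1 - t) * a + t * b = (b - a) * t + a := by ring
    have h2 : (2 * ((b - a) * t + a) - a - b) / (b - a) = 2 * t - 1 := by
      field_simp
      ring
    rw [h1, h2]
  -- integration by parts
  have hderiv : ∀ x ∈ Set.uIcc a b, HasDerivAt g (g' x) x := by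
    intro x hx
    rw [Set.uIcc_of_le (le_of_lt hab)] at hx
    exact ((hdiff x hx).log (ne_of_gt (hpos x hx))).hasDerivAt
  have hu : ∀ x ∈ Set.uIcc a b, HasDerivAt (fun x => 2 * x - a - b) (2:ℝ) x := by
    intro x _
    simpa using (((hasDerivAt_id x).const_mul 2).sub_const a).sub_const b
  have hibp : (∫ x in a..b, (2 * x - a - b) * g' x) =
      (2 * b - a - b) * g b - (2 * a - a - b) * g a - ∫ x in a..b, 2 * g x := by
    exact intervalIntegral.integral_mul_deriv_eq_deriv_mul hu hderiv
      (intervalIntegrable_const) hint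
  -- abbreviations
  set A := g a with hAdef
  set B := g b with hBdef
  set I := ∫ u in a..b, g u with hIdef
  have hint2 : (∫ x in a..b, 2 * g x) = 2 * I := by
    rw [intervalIntegral.integral_const_mul]
  have hibp' : (∫ x in a..b, (2 * x - a - b) * g' x) = (b - a) * B + (b - a) * A - 2 * I := by
    rw [hibp, hint2]; ring
  -- compute the t-integral value
  have hdiv : (∫ x in a..b, ((2 * x - a - b) / (b - a)) * g' x) =
      (1 / (b - a)) * ∫ x in a..b, (2 * x - a - b) * g' x := by
    rw [← intervalIntegral.integral_const_mul]
    apply intervalIntegral.integral_congr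
    intro x _
    field_simp
  have hval : (∫ t in (0:ℝ)..1, (2 * t - 1) * g' ((1 - t) * a + t * b)) =
      (1 / (b - a)) * ((1 / (b - a)) * ((b - a) * B + (b - a) * A - 2 * I)) := by
    rw [heq1]
    have := hsub
    rw [hdiv, hibp'] at this
    have h := congrArg (fun z => (1 / (b - a)) * z) this
    simp only [smul_eq_mul] at h
    rw [← mul_assoc, one_div_mul_cancel (ne_of_gt hba), one_mul] at h
    exact h
  -- sqrt to exp
  have hfa := hpos a hmem_a
  have hfb := hpos b hmem_b
  have hsqrt : Real.sqrt (f a * f b) = Real.exp ((A + B) / 2) := by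
    rw [Real.exp_half]
    congr 1
    rw [Real.exp_add, show A = Real.log (f a) from rfl, show B = Real.log (f b) from rfl,
      Real.exp_log hfa, Real.exp_log hfb]
  rw [hsqrt, ← Real.exp_add, hval]
  congr 1
  have hab' : a - b ≠ 0 := by intro h; linarith
  field_simp
  ring
end

section
/- Midpoint inequality for multiplicatively convex derivative: if f : [a,b] → ℝ⁺ is differentiable, a < b, and f* := e^{f'/f} is multiplicatively convex on [a,b] with f* ≥ 1, then f((a+b)/2) · exp((1/(a-b)) ∫_a^b ln f(u) du) ≤ ( f*(a) · f*((a+b)/2)^4 · f*(b) )^{(b-a)/24}. -/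
/-!
Write `g = log f` and `D = g' = f' / f`; the hypotheses say that `D` is convex and nonnegative, and
after taking logarithms the claim reads `g(m) - ⨍ g ≤ (b - a) / 24 * (D a + 4 D m + D b)` with
`m = (a + b) / 2`. On `[a, m]`, `D` lies below its chord, so `g m - g u` is at most the integral of
the chord over `[u, m]`; integrating in `u` gives
`∫_a^m (g m - g u) ≤ (m - a)² (D a + 2 D m) / 6`.
On `[m, b]`, `g` is increasing because `D ≥ 0`, so that half contributes a nonpositive amount.
-/

open Real intervalIntegral Set

lemma integral_sub_add_sq (a c p q : ℝ) :
    ∫ u in a..c, (p * (u - a) + q * (u - a) ^ 2) = p * (c - a) ^ 2 / 2 + q * (c - a) ^ 3 / 3 := by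
  rw [integral_comp_sub_right (fun u => p * u + q * u ^ 2),
    integral_add (f := fun u => p * u) (g := fun u => q * u ^ 2)
      ((by fun_prop : Continuous _).intervalIntegrable _ _)
      ((by fun_prop : Continuous _).intervalIntegrable _ _),
    integral_const_mul, integral_const_mul, integral_id, integral_pow]
  ring

lemma mul_sub_integral_le_of_hasDerivAt_of_convexOn {g D : ℝ → ℝ} {a c : ℝ} (hac : a < c)
    (hg : ∀ x ∈ Icc a c, HasDerivAt g (D x) x) (hD : ConvexOn ℝ (Icc a c) D) :
    (c - a) * g c - ∫ u in a..c, g u ≤ (c - a) ^ 2 / 6 * (D a + 2 * D c) := by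
  have hca : 0 < c - a := sub_pos.2 hac
  set k := (D c - D a) / (c - a)
  -- a primitive of the chord of `D` over `[a, c]`
  set P : ℝ → ℝ := fun u => D a * (u - a) + k / 2 * (u - a) ^ 2
  have hP : ∀ x, HasDerivAt P (D a + k * (x - a)) x := fun x => by
    refine ((((hasDerivAt_id' x).sub_const a).const_mul (D a)).add
      ((((hasDerivAt_id' x).sub_const a).pow 2).const_mul (k / 2))).congr_deriv ?_
    push_cast
    ring
  have hchord : ∀ x ∈ Ioo a c, D x ≤ D a + k * (x - a) := fun x hx => by
    have h := hD.secant_mono_aux1 (left_mem_Icc.2 hac.le) (right_mem_Icc.2 hac.le) hx.1 hx.2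
    rw [show D a + k * (x - a) = ((c - x) * D a + (x - a) * D c) / (c - a) by
      simp only [k]; field_simp; ring]
    rwa [le_div_iff₀ hca, mul_comm]
  have hgc : ContinuousOn g (Icc a c) := fun x hx => (hg x hx).continuousAt.continuousWithinAt
  have hanti : AntitoneOn (fun u => g u - P u) (Icc a c) := by
    refine antitoneOn_of_hasDerivWithinAt_nonpos (f' := fun x => D x - (D a + k * (x - a)))
      (convex_Icc a c) (hgc.sub fun x _ => (hP x).continuousAt.continuousWithinAt)
      (fun x hx => ((hg x (interior_subset hx)).sub (hP x)).hasDerivWithinAt) fun x hx => ?_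
    rw [interior_Icc] at hx
    linarith [hchord x hx]
  have hlower : ∀ u ∈ Icc a c, g c - P c + P u ≤ g u := fun u hu => by
    linarith [hanti hu (right_mem_Icc.2 hac.le) hu.2]
  have hPc : Continuous P := continuous_iff_continuousAt.2 fun x => (hP x).continuousAt
  have hintegral : ∫ u in a..c, (g c - P c + P u) ≤ ∫ u in a..c, g u :=
    integral_mono_on hac.le ((continuous_const.add hPc).intervalIntegrable a c)
      (hgc.intervalIntegrable_of_Icc hac.le) hlower
  rw [integral_add intervalIntegrable_const (hPc.intervalIntegrable a c),
    integral_const, smul_eq_mul, integral_sub_add_sq] at hintegral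
  have hPc' : P c = (c - a) * (D a + D c) / 2 := by simp only [P, k]; field_simp; ring
  rw [hPc'] at hintegral
  have hk : k / 2 * (c - a) ^ 3 / 3 = (D c - D a) * (c - a) ^ 2 / 6 := by
    simp only [k]; field_simp; ring
  linarith

lemma midpoint_sub_average_le_of_convexOn_deriv {g D : ℝ → ℝ} {a b : ℝ} (hab : a < b)
    (hg : ∀ x ∈ Icc a b, HasDerivAt g (D x) x) (hD : ConvexOn ℝ (Icc a b) D)
    (hD0 : ∀ x ∈ Icc a b, 0 ≤ D x) :
    g ((a + b) / 2) + 1 / (a - b) * ∫ u in a..b, g u ≤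
      (D a + 4 * D ((a + b) / 2) + D b) * ((b - a) / 24) := by
  set m := (a + b) / 2 with hm
  have ham : a < m := by rw [hm]; linarith
  have hmb : m < b := by rw [hm]; linarith
  have hleft_sub : Icc a m ⊆ Icc a b := Icc_subset_Icc_right hmb.le
  have hright_sub : Icc m b ⊆ Icc a b := Icc_subset_Icc_left ham.le
  have hgc : ContinuousOn g (Icc a b) := fun x hx => (hg x hx).continuousAt.continuousWithinAt
  have hleft : (m - a) * g m - ∫ u in a..m, g u ≤ (m - a) ^ 2 / 6 * (D a + 2 * D m) :=
    mul_sub_integral_le_of_hasDerivAt_of_convexOn ham (fun x hx => hg x (hleft_sub hx))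
      (hD.subset hleft_sub (convex_Icc a m))
  have hmono : MonotoneOn g (Icc m b) := by
    exact monotoneOn_of_hasDerivWithinAt_nonneg (convex_Icc m b) (hgc.mono hright_sub)
      (fun x hx => (hg x (hright_sub (interior_subset hx))).hasDerivWithinAt)
      fun x hx => hD0 x (hright_sub (interior_subset hx))
  have hright : (b - m) * g m ≤ ∫ u in m..b, g u := by
    have : ∫ _ in m..b, g m ≤ ∫ u in m..b, g u :=
      integral_mono_on hmb.le intervalIntegrable_const
        ((hgc.mono hright_sub).intervalIntegrable_of_Icc hmb.le)
        fun u hu => hmono (left_mem_Icc.2 hmb.le) hu hu.1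
    rwa [integral_const, smul_eq_mul] at this
  have hsplit : ∫ u in a..b, g u = (∫ u in a..m, g u) + ∫ u in m..b, g u :=
    (integral_add_adjacent_intervals ((hgc.mono hleft_sub).intervalIntegrable_of_Icc ham.le)
      ((hgc.mono hright_sub).intervalIntegrable_of_Icc hmb.le)).symm
  have hDm := hD0 m ⟨ham.le, hmb.le⟩
  have hDb := hD0 b (right_mem_Icc.2 hab.le)
  have hba : 0 < b - a := sub_pos.2 hab
  rw [show m - a = (b - a) / 2 by rw [hm]; ring] at hleft
  rw [show b - m = (b - a) / 2 by rw [hm]; ring] at hright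
  have key : (b - a) * g m - ∫ u in a..b, g u ≤
      (b - a) ^ 2 / 24 * (D a + 2 * D m) := by
    rw [hsplit]
    linarith
  rw [show g m + 1 / (a - b) * ∫ u in a..b, g u =
      ((b - a) * g m - ∫ u in a..b, g u) / (b - a) by
    field_simp [(sub_neg.2 hab).ne]; ring, div_le_iff₀ hba]
  nlinarith [mul_nonneg (sq_nonneg (b - a)) (add_nonneg hDm hDb)]

lemma convexOn_of_exp_le_exp_rpow_mul_exp_rpow {s : Set ℝ} {D : ℝ → ℝ} (hs : Convex ℝ s)
    (h : ∀ x ∈ s, ∀ y ∈ s, ∀ t ∈ Icc (0:ℝ) 1,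
      exp (D (t * x + (1 - t) * y)) ≤ exp (D x) ^ t * exp (D y) ^ (1 - t)) :
    ConvexOn ℝ s D := by
  refine ⟨hs, fun x hx y hy t u ht hu htu => ?_⟩
  obtain rfl : u = 1 - t := by linarith
  have := h x hx y hy t ⟨ht, by linarith⟩
  rwa [← exp_mul, ← exp_mul, ← exp_add, exp_le_exp, mul_comm (D x), mul_comm (D y)] at this

theorem mul_midpoint_inequality_general (f : ℝ → ℝ) (a b : ℝ) (hab : a < b)
    (hpos : ∀ x ∈ Set.Icc a b, 0 < f x)
    (hdiff : ∀ x ∈ Set.Icc a b, DifferentiableAt ℝ f x)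
    (hconv : ∀ x ∈ Set.Icc a b, ∀ y ∈ Set.Icc a b, ∀ t ∈ Set.Icc (0:ℝ) 1,
      Real.exp (deriv f (t * x + (1 - t) * y) / f (t * x + (1 - t) * y)) ≤
        Real.exp (deriv f x / f x) ^ t * Real.exp (deriv f y / f y) ^ (1 - t))
    (hone : ∀ x ∈ Set.Icc a b, 1 ≤ Real.exp (deriv f x / f x)) :
    f ((a + b) / 2) * Real.exp ((1 / (a - b)) * ∫ u in a..b, Real.log (f u)) ≤
      (Real.exp (deriv f a / f a) *
        Real.exp (deriv f ((a + b) / 2) / f ((a + b) / 2)) ^ (4:ℕ) *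
        Real.exp (deriv f b / f b)) ^ ((b - a) / 24) := by
  have key := midpoint_sub_average_le_of_convexOn_deriv (g := fun x => log (f x))
    (D := fun x => deriv f x / f x) hab
    (fun x hx => (hdiff x hx).hasDerivAt.log (hpos x hx).ne')
    (convexOn_of_exp_le_exp_rpow_mul_exp_rpow (convex_Icc a b) hconv)
    (fun x hx => one_le_exp_iff.1 (hone x hx))
  calc f ((a + b) / 2) * exp (1 / (a - b) * ∫ u in a..b, log (f u))
      = exp (log (f ((a + b) / 2)) + 1 / (a - b) * ∫ u in a..b, log (f u)) := by
        rw [exp_add, exp_log (hpos _ ⟨by linarith, by linarith⟩)]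
    _ ≤ _ := exp_le_exp.2 key
    _ = _ := by rw [exp_mul, exp_add, exp_add, ← exp_nat_mul]; norm_num

/-- Midpoint inequality for functions with multiplicatively convex multiplicative derivative. -/
theorem mul_midpoint_inequality (f : ℝ → ℝ) (a b : ℝ) (hab : a < b)
    (hpos : ∀ x ∈ Set.Icc a b, 0 < f x)
    (hdiff : ∀ x ∈ Set.Icc a b, DifferentiableAt ℝ f x)
    (hint : IntervalIntegrable (fun x => deriv f x / f x) MeasureTheory.volume a b)
    (hconv : ∀ x ∈ Set.Icc a b, ∀ y ∈ Set.Icc a b, ∀ t ∈ Set.Icc (0:ℝ) 1,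
      Real.exp (deriv f (t * x + (1 - t) * y) / f (t * x + (1 - t) * y)) ≤
        Real.exp (deriv f x / f x) ^ t * Real.exp (deriv f y / f y) ^ (1 - t))
    (hone : ∀ x ∈ Set.Icc a b, 1 ≤ Real.exp (deriv f x / f x)) :
    f ((a + b) / 2) * Real.exp ((1 / (a - b)) * ∫ u in a..b, Real.log (f u)) ≤
      (Real.exp (deriv f a / f a) *
        Real.exp (deriv f ((a + b) / 2) / f ((a + b) / 2)) ^ (4:ℕ) *
        Real.exp (deriv f b / f b)) ^ ((b - a) / 24) :=
  mul_midpoint_inequality_general f a b hab hpos hdiff hconv hone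
end

section
/- If f : [a,b] → ℝ⁺ is differentiable, a < b, and f* = e^{f'/f} satisfies 1 ≤ f* ≤ M on [a,b] (with f* multiplicatively convex), then f((a+b)/2) · exp((1/(a-b)) ∫_a^b ln f(u) du) ≤ M^{(b-a)/4}. -/
open Real intervalIntegral

/-- Midpoint inequality with a uniform bound `M` on the multiplicative derivative. -/
theorem mul_midpoint_inequality_bound (f : ℝ → ℝ) (a b M : ℝ) (hab : a < b)
    (hpos : ∀ x ∈ Set.Icc a b, 0 < f x)
    (hdiff : ∀ x ∈ Set.Icc a b, DifferentiableAt ℝ f x)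
    (hint : IntervalIntegrable (fun x => deriv f x / f x) MeasureTheory.volume a b)
    (hconv : ∀ x ∈ Set.Icc a b, ∀ y ∈ Set.Icc a b, ∀ t ∈ Set.Icc (0:ℝ) 1,
      Real.exp (deriv f (t * x + (1 - t) * y) / f (t * x + (1 - t) * y)) ≤
        Real.exp (deriv f x / f x) ^ t * Real.exp (deriv f y / f y) ^ (1 - t))
    (hone : ∀ x ∈ Set.Icc a b, 1 ≤ Real.exp (deriv f x / f x))
    (hM : ∀ x ∈ Set.Icc a b, Real.exp (deriv f x / f x) ≤ M) :
    f ((a + b) / 2) * Real.exp ((1 / (a - b)) * ∫ u in a..b, Real.log (f u)) ≤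
      M ^ ((b - a) / 4) := by
  set m : ℝ := (a + b) / 2 with hmdef
  have hba : (0:ℝ) < b - a := by linarith
  have hm_mem : m ∈ Set.Icc a b := ⟨by simp [hmdef]; linarith, by simp [hmdef]; linarith⟩
  have haI : a ∈ Set.Icc a b := ⟨le_refl a, hab.le⟩
  have hbI : b ∈ Set.Icc a b := ⟨hab.le, le_refl b⟩
  have hM1 : 1 ≤ M := le_trans (hone a haI) (hM a haI)
  have hM0 : (0:ℝ) < M := lt_of_lt_of_le one_pos hM1
  set L := Real.log M with hLdef
  have hL0 : 0 ≤ L := Real.log_nonneg hM1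
  have huIcc : Set.uIcc a b = Set.Icc a b := Set.uIcc_of_le hab.le
  -- derivative nonneg and bounded by L
  have hdnn : ∀ x ∈ Set.Icc a b, 0 ≤ deriv f x / f x := by
    intro x hx
    have := hone x hx
    by_contra h
    push_neg at h
    have := Real.exp_lt_one_iff.mpr h
    linarith
  have hdle : ∀ x ∈ Set.Icc a b, deriv f x / f x ≤ L := by
    intro x hx
    exact (Real.le_log_iff_exp_le hM0).mpr (hM x hx)
  -- log f has derivative deriv f / f on Icc
  have hderiv : ∀ x ∈ Set.Icc a b, HasDerivAt (fun u => Real.log (f u)) (deriv f x / f x) x :=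
    fun x hx => ((hdiff x hx).hasDerivAt).log (hpos x hx).ne'
  -- FTC
  have hftc : ∀ u ∈ Set.Icc a b, ∀ v ∈ Set.Icc a b,
      (∫ t in u..v, deriv f t / f t) = Real.log (f v) - Real.log (f u) := by
    intro u hu v hv
    have hsub : Set.uIcc u v ⊆ Set.Icc a b := by
      rw [← huIcc]
      exact Set.uIcc_subset_uIcc (huIcc ▸ hu) (huIcc ▸ hv)
    exact intervalIntegral.integral_eq_sub_of_hasDerivAt
      (fun t ht => hderiv t (hsub ht))
      (hint.mono_set (huIcc ▸ hsub))
  -- continuity of log f on Icc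
  have hcont : ContinuousOn (fun u => Real.log (f u)) (Set.Icc a b) := by
    apply ContinuousOn.log
    · exact fun x hx => ((hdiff x hx).continuousAt).continuousWithinAt
    · exact fun x hx => (hpos x hx).ne'
  have hgint : ∀ u ∈ Set.Icc a b, ∀ v ∈ Set.Icc a b,
      IntervalIntegrable (fun u => Real.log (f u)) MeasureTheory.volume u v := by
    intro u hu v hv
    apply ContinuousOn.intervalIntegrable
    apply hcont.mono
    rw [← huIcc]
    exact Set.uIcc_subset_uIcc (huIcc ▸ hu) (huIcc ▸ hv)
  -- pointwise bounds on the integrand log (f m) - log (f u)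
  have hbd1 : ∀ u ∈ Set.Icc a m, Real.log (f m) - Real.log (f u) ≤ (m - u) * L := by
    intro u hu
    have huI : u ∈ Set.Icc a b := ⟨hu.1, le_trans hu.2 hm_mem.2⟩
    have h1 : (∫ t in u..m, deriv f t / f t) = Real.log (f m) - Real.log (f u) :=
      hftc u huI m hm_mem
    have h2 : (∫ t in u..m, deriv f t / f t) ≤ ∫ t in u..m, L := by
      apply intervalIntegral.integral_mono_on hu.2
      · apply hint.mono_set
        rw [huIcc]
        exact Set.uIcc_subset_uIcc (huIcc ▸ huI) (huIcc ▸ hm_mem) |>.trans (le_of_eq huIcc)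
      · exact intervalIntegrable_const
      · intro t ht
        exact hdle t ⟨le_trans hu.1 ht.1, le_trans ht.2 hm_mem.2⟩
    rw [h1] at h2
    simpa [mul_comm] using h2
  have hbd2 : ∀ u ∈ Set.Icc m b, Real.log (f m) - Real.log (f u) ≤ 0 := by
    intro u hu
    have huI : u ∈ Set.Icc a b := ⟨le_trans hm_mem.1 hu.1, hu.2⟩
    have h1 : (∫ t in m..u, deriv f t / f t) = Real.log (f u) - Real.log (f m) :=
      hftc m hm_mem u huI
    have h2 : 0 ≤ ∫ t in m..u, deriv f t / f t := by
      apply intervalIntegral.integral_nonneg hu.1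
      intro t ht
      exact hdnn t ⟨le_trans hm_mem.1 ht.1, le_trans ht.2 hu.2⟩
    rw [h1] at h2
    linarith
  -- integral bounds on pieces
  have hint1 : IntervalIntegrable (fun u => Real.log (f m) - Real.log (f u))
      MeasureTheory.volume a m := by
    exact (_root_.intervalIntegrable_const).sub (hgint a haI m hm_mem)
  have hint2 : IntervalIntegrable (fun u => Real.log (f m) - Real.log (f u))
      MeasureTheory.volume m b := by
    exact (_root_.intervalIntegrable_const).sub (hgint m hm_mem b hbI)
  have hI1 : (∫ u in a..m, (Real.log (f m) - Real.log (f u))) ≤ (m - a) ^ 2 / 2 * L := by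
    have h2 : (∫ u in a..m, (Real.log (f m) - Real.log (f u))) ≤
        ∫ u in a..m, (m - u) * L := by
      apply intervalIntegral.integral_mono_on hm_mem.1 hint1
      · exact (Continuous.intervalIntegrable (by continuity) a m)
      · exact hbd1
    have h3 : (∫ u in a..m, (m - u) * L) = (m - a) ^ 2 / 2 * L := by
      have : (∫ u in a..m, (m - u) * L) = (∫ u in a..m, ((m:ℝ) - u)) * L :=
        intervalIntegral.integral_mul_const L _
      rw [this, intervalIntegral.integral_sub _root_.intervalIntegrable_const intervalIntegrable_id,
        intervalIntegral.integral_const, integral_id]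
      simp only [smul_eq_mul]
      ring
    linarith
  have hI2 : (∫ u in m..b, (Real.log (f m) - Real.log (f u))) ≤ 0 := by
    have h0 : 0 ≤ ∫ u in m..b, (Real.log (f u) - Real.log (f m)) := by
      apply intervalIntegral.integral_nonneg hm_mem.2
      intro u hu
      linarith [hbd2 u hu]
    have heq : (∫ u in m..b, (Real.log (f m) - Real.log (f u))) =
        -∫ u in m..b, (Real.log (f u) - Real.log (f m)) := by
      rw [← intervalIntegral.integral_neg]
      congr 1
      funext u
      ring
    rw [heq]
    linarith
  -- combine
  have hsplit : (∫ u in a..b, (Real.log (f m) - Real.log (f u))) =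
      (∫ u in a..m, (Real.log (f m) - Real.log (f u))) +
      (∫ u in m..b, (Real.log (f m) - Real.log (f u))) :=
    (intervalIntegral.integral_add_adjacent_intervals hint1 hint2).symm
  have htot : (∫ u in a..b, (Real.log (f m) - Real.log (f u))) =
      (b - a) * Real.log (f m) - ∫ u in a..b, Real.log (f u) := by
    rw [intervalIntegral.integral_sub _root_.intervalIntegrable_const (hgint a haI b hbI),
      intervalIntegral.integral_const]
    simp only [smul_eq_mul]
  have key : (b - a) * Real.log (f m) - (∫ u in a..b, Real.log (f u)) ≤
      (m - a) ^ 2 / 2 * L := by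
    rw [← htot, hsplit]; linarith
  -- final reduction
  set S := ∫ u in a..b, Real.log (f u) with hSdef
  have hfm : 0 < f m := hpos m hm_mem
  have hgoal : Real.log (f m) + (1 / (a - b)) * S ≤ (b - a) / 4 * L := by
    have h3 : Real.log (f m) + (1 / (a - b)) * S =
        ((b - a) * Real.log (f m) - S) / (b - a) := by
      have hne : a - b ≠ 0 := by linarith
      have hne2 : b - a ≠ 0 := by linarith
      field_simp
      ring
    rw [h3, div_le_iff₀ hba]
    have hma : (m - a) ^ 2 = (b - a) ^ 2 / 4 := by
      rw [hmdef]; ring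
    nlinarith [key, hL0, sq_nonneg (b - a)]
  calc f m * Real.exp ((1 / (a - b)) * S)
      = Real.exp (Real.log (f m) + (1 / (a - b)) * S) := by
        rw [Real.exp_add, Real.exp_log hfm]
    _ ≤ Real.exp ((b - a) / 4 * L) := Real.exp_le_exp.mpr hgoal
    _ = M ^ ((b - a) / 4) := by
        rw [Real.rpow_def_of_pos hM0, mul_comm]
end

section
/- Midpoint inequality, endpoint form: if f : [a,b] → ℝ⁺ is differentiable, a < b, and f* = e^{f'/f} is multiplicatively convex on [a,b] with f* ≥ 1, then f((a+b)/2) · exp((1/(a-b)) ∫_a^b ln f(u) du) ≤ (f*(a) f*(b))^{(b-a)/8}. -/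
open Real Set MeasureTheory intervalIntegral

/-! Writing `φ = f'/f = (log f)'`, multiplicative convexity of `f* = exp ∘ φ` is ordinary
convexity of `φ`, so `φ ≤ max (φ a) (φ b) ≤ φ a + φ b =: L` on `[a, b]`, while `f* ≥ 1`
says `φ ≥ 0`. Hence `g = log f` is monotone with slopes at most `L`. Below the midpoint `m`,
`g m - g u ≤ L (m - u)` integrates to at most `L (b - a)² / 8`; above `m`, `g m - g u ≤ 0`.
Dividing by `b - a` and exponentiating gives the claim. -/

lemma convexOn_of_exp_comp_le_rpow_mul_rpow {s : Set ℝ} (hs : Convex ℝ s) {φ : ℝ → ℝ}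
    (h : ∀ x ∈ s, ∀ y ∈ s, ∀ t ∈ Icc (0:ℝ) 1,
      exp (φ (t * x + (1 - t) * y)) ≤ exp (φ x) ^ t * exp (φ y) ^ (1 - t)) :
    ConvexOn ℝ s φ := by
  refine ⟨hs, fun x hx y hy t u ht _ htu => ?_⟩
  obtain rfl : u = 1 - t := by linarith
  have := h x hx y hy t ⟨ht, by linarith⟩
  rwa [← exp_mul, ← exp_mul, ← exp_add, exp_le_exp, mul_comm (φ x), mul_comm (φ y)] at this

lemma integral_const_sub_le_of_sub_le {g : ℝ → ℝ} {a m L : ℝ} (ham : a ≤ m)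
    (hg : IntervalIntegrable g volume a m)
    (hslope : ∀ u ∈ Icc a m, g m - g u ≤ L * (m - u)) :
    ∫ u in a..m, (g m - g u) ≤ L * (m - a) ^ 2 / 2 := calc
  ∫ u in a..m, (g m - g u) ≤ ∫ u in a..m, L * (m - u) :=
    integral_mono_on ham (intervalIntegrable_const.sub hg)
      ((by fun_prop : Continuous fun u => L * (m - u)).intervalIntegrable a m) hslope
  _ = L * (m - a) ^ 2 / 2 := by
    rw [integral_comp_sub_left (fun x => L * x), intervalIntegral.integral_const_mul,
      integral_id, sub_self]
    ring

lemma mul_midpoint_sub_integral_le {g : ℝ → ℝ} {a b L : ℝ} (hab : a ≤ b)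
    (hg : ContinuousOn g (Icc a b)) (hmono : MonotoneOn g (Icc a b))
    (hslope : ∀ x ∈ Icc a b, ∀ y ∈ Icc a b, x ≤ y → g y - g x ≤ L * (y - x)) :
    (b - a) * g ((a + b) / 2) - ∫ u in a..b, g u ≤ L * (b - a) ^ 2 / 8 := by
  set m := (a + b) / 2 with hm_def
  have ham : a ≤ m := by linarith
  have hmb : m ≤ b := by linarith
  have hm : m ∈ Icc a b := ⟨ham, hmb⟩
  have hg_am : IntervalIntegrable g volume a m :=
    (hg.mono (Icc_subset_Icc le_rfl hmb)).intervalIntegrable_of_Icc ham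
  have hg_mb : IntervalIntegrable g volume m b :=
    (hg.mono (Icc_subset_Icc ham le_rfl)).intervalIntegrable_of_Icc hmb
  have below : ∫ u in a..m, (g m - g u) ≤ L * (m - a) ^ 2 / 2 :=
    integral_const_sub_le_of_sub_le ham hg_am fun u hu =>
      hslope u ⟨hu.1, hu.2.trans hmb⟩ m hm hu.2
  have above : ∫ u in m..b, (g m - g u) ≤ 0 := by
    simpa using integral_mono_on hmb (intervalIntegrable_const.sub hg_mb) intervalIntegrable_const
      fun u hu => sub_nonpos.2 (hmono hm ⟨ham.trans hu.1, hu.2⟩ hu.1)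
  have split : (b - a) * g m - ∫ u in a..b, g u =
      (∫ u in a..m, (g m - g u)) + ∫ u in m..b, (g m - g u) := by
    rw [integral_add_adjacent_intervals (intervalIntegrable_const.sub hg_am)
      (intervalIntegrable_const.sub hg_mb),
      integral_sub intervalIntegrable_const (hg.intervalIntegrable_of_Icc hab),
      intervalIntegral.integral_const, smul_eq_mul]
  have hma : L * (m - a) ^ 2 / 2 = L * (b - a) ^ 2 / 8 := by ring
  linarith

lemma midpoint_add_average_le_of_hasDerivAt {g g' : ℝ → ℝ} {a b L : ℝ} (hab : a < b)
    (hg : ∀ x ∈ Icc a b, HasDerivAt g (g' x) x)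
    (hg'_nonneg : ∀ x ∈ Icc a b, 0 ≤ g' x) (hg'_le : ∀ x ∈ Icc a b, g' x ≤ L) :
    g ((a + b) / 2) + 1 / (a - b) * ∫ u in a..b, g u ≤ L * ((b - a) / 8) := by
  have hcont : ContinuousOn g (Icc a b) := fun x hx => (hg x hx).continuousAt.continuousWithinAt
  have hderiv : ∀ x ∈ interior (Icc a b), HasDerivWithinAt g (g' x) (interior (Icc a b)) x :=
    fun x hx => (hg x (interior_subset hx)).hasDerivWithinAt
  have hmono : MonotoneOn g (Icc a b) :=
    monotoneOn_of_hasDerivWithinAt_nonneg (convex_Icc a b) hcont hderiv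
      fun x hx => hg'_nonneg x (interior_subset hx)
  have hslope : ∀ x ∈ Icc a b, ∀ y ∈ Icc a b, x ≤ y → g y - g x ≤ L * (y - x) :=
    (convex_Icc a b).image_sub_le_mul_sub_of_deriv_le hcont
      (fun x hx => (hderiv x hx).differentiableWithinAt)
      fun x hx => (hg x (interior_subset hx)).deriv ▸ hg'_le x (interior_subset hx)
  have hba : 0 < b - a := sub_pos.2 hab
  have key := mul_midpoint_sub_integral_le hab.le hcont hmono hslope
  rw [show 1 / (a - b) = -(1 / (b - a)) by rw [← neg_sub, div_neg]]
  calc g ((a + b) / 2) + -(1 / (b - a)) * ∫ u in a..b, g u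
      = ((b - a) * g ((a + b) / 2) - ∫ u in a..b, g u) / (b - a) := by field_simp; ring
    _ ≤ L * (b - a) ^ 2 / 8 / (b - a) := by gcongr
    _ = L * ((b - a) / 8) := by field_simp

theorem mul_midpoint_inequality_endpoints_general (f : ℝ → ℝ) (a b : ℝ) (hab : a < b)
    (hpos : ∀ x ∈ Set.Icc a b, 0 < f x)
    (hdiff : ∀ x ∈ Set.Icc a b, DifferentiableAt ℝ f x)
    (hconv : ∀ x ∈ Set.Icc a b, ∀ y ∈ Set.Icc a b, ∀ t ∈ Set.Icc (0:ℝ) 1,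
      Real.exp (deriv f (t * x + (1 - t) * y) / f (t * x + (1 - t) * y)) ≤
        Real.exp (deriv f x / f x) ^ t * Real.exp (deriv f y / f y) ^ (1 - t))
    (hone : ∀ x ∈ Set.Icc a b, 1 ≤ Real.exp (deriv f x / f x)) :
    f ((a + b) / 2) * Real.exp ((1 / (a - b)) * ∫ u in a..b, Real.log (f u)) ≤
      (Real.exp (deriv f a / f a) * Real.exp (deriv f b / f b)) ^ ((b - a) / 8) := by
  set φ : ℝ → ℝ := fun x => deriv f x / f x
  have ha : a ∈ Icc a b := left_mem_Icc.2 hab.le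
  have hb : b ∈ Icc a b := right_mem_Icc.2 hab.le
  have hφ_nonneg : ∀ x ∈ Icc a b, 0 ≤ φ x := fun x hx => one_le_exp_iff.1 (hone x hx)
  have hφ_le : ∀ x ∈ Icc a b, φ x ≤ φ a + φ b := fun x hx =>
    ((convexOn_of_exp_comp_le_rpow_mul_rpow (convex_Icc a b) hconv).le_on_segment ha hb
      (by rwa [segment_eq_Icc hab.le])).trans
      (max_le_add_of_nonneg (hφ_nonneg a ha) (hφ_nonneg b hb))
  have hlog : ∀ x ∈ Icc a b, HasDerivAt (fun u => log (f u)) (φ x) x := fun x hx =>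
    (hdiff x hx).hasDerivAt.log (hpos x hx).ne'
  calc f ((a + b) / 2) * exp ((1 / (a - b)) * ∫ u in a..b, log (f u))
      = exp (log (f ((a + b) / 2)) + (1 / (a - b)) * ∫ u in a..b, log (f u)) := by
        rw [exp_add, exp_log (hpos _ ⟨by linarith, by linarith⟩)]
    _ ≤ exp ((φ a + φ b) * ((b - a) / 8)) :=
        exp_le_exp.2 (midpoint_add_average_le_of_hasDerivAt hab hlog hφ_nonneg hφ_le)
    _ = (exp (φ a) * exp (φ b)) ^ ((b - a) / 8) := by rw [← exp_add, ← exp_mul]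

/-- Midpoint inequality, endpoint form. -/
theorem mul_midpoint_inequality_endpoints (f : ℝ → ℝ) (a b : ℝ) (hab : a < b)
    (hpos : ∀ x ∈ Set.Icc a b, 0 < f x)
    (hdiff : ∀ x ∈ Set.Icc a b, DifferentiableAt ℝ f x)
    (hint : IntervalIntegrable (fun x => deriv f x / f x) MeasureTheory.volume a b)
    (hconv : ∀ x ∈ Set.Icc a b, ∀ y ∈ Set.Icc a b, ∀ t ∈ Set.Icc (0:ℝ) 1,
      Real.exp (deriv f (t * x + (1 - t) * y) / f (t * x + (1 - t) * y)) ≤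
        Real.exp (deriv f x / f x) ^ t * Real.exp (deriv f y / f y) ^ (1 - t))
    (hone : ∀ x ∈ Set.Icc a b, 1 ≤ Real.exp (deriv f x / f x)) :
    f ((a + b) / 2) * Real.exp ((1 / (a - b)) * ∫ u in a..b, Real.log (f u)) ≤
      (Real.exp (deriv f a / f a) * Real.exp (deriv f b / f b)) ^ ((b - a) / 8) :=
  mul_midpoint_inequality_endpoints_general f a b hab hpos hdiff hconv hone
end

section
/- If f : [a,b] → ℝ⁺ is differentiable, a < b, and f* = e^{f'/f} satisfies 1 ≤ f* ≤ M and is multiplicatively convex on [a,b], then √(f(a) f(b)) · exp((1/(a-b)) ∫_a^b ln f(u) du) ≤ M^{(b-a)/4}. -/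
open Real intervalIntegral Set

/-!
With `g = log f`, the hypotheses say `0 ≤ g' ≤ log M` on `[a, b]`. Hence `g a ≤ g x` and
`g b ≤ g x + (b - x) log M`, so `g a + g b ≤ 2 g x + (b - x) log M`; integrating over `[a, b]`
bounds `(g a + g b) / 2 - ⨍ g` by `(b - a) log M / 4`, which exponentiates to the claim.
-/

theorem add_le_two_mul_add_mul_sub_of_hasDerivAt {g g' : ℝ → ℝ} {a b L : ℝ}
    (hg : ContinuousOn g (Icc a b)) (hg' : ∀ x ∈ Ioo a b, HasDerivAt g (g' x) x)
    (hbound : ∀ x ∈ Ioo a b, g' x ∈ Icc 0 L) {x : ℝ} (hx : x ∈ Icc a b) :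
    g a + g b ≤ 2 * g x + L * (b - x) := by
  have hab : a ≤ b := hx.1.trans hx.2
  have hinterior : interior (Icc a b) = Ioo a b := interior_Icc
  have hmono : MonotoneOn g (Icc a b) :=
    monotoneOn_of_hasDerivWithinAt_nonneg (convex_Icc a b) hg
      (fun y hy ↦ (hg' y (hinterior ▸ hy)).hasDerivWithinAt)
      (fun y hy ↦ (hbound y (hinterior ▸ hy)).1)
  have hslope : MonotoneOn (fun y ↦ L * y - g y) (Icc a b) :=
    monotoneOn_of_hasDerivWithinAt_nonneg (convex_Icc a b) (by fun_prop)
      (fun y hy ↦ (((hasDerivAt_id y).const_mul L).sub (hg' y (hinterior ▸ hy))).hasDerivWithinAt)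
      (fun y hy ↦ by simpa using (hbound y (hinterior ▸ hy)).2)
  have h₁ : g a ≤ g x := hmono (left_mem_Icc.2 hab) hx hx.1
  have h₂ : L * x - g x ≤ L * b - g b := hslope hx (right_mem_Icc.2 hab) hx.2
  linarith

theorem trapezoid_sub_average_le_of_hasDerivAt {g g' : ℝ → ℝ} {a b L : ℝ} (hab : a < b)
    (hg : ContinuousOn g (Icc a b)) (hg' : ∀ x ∈ Ioo a b, HasDerivAt g (g' x) x)
    (hbound : ∀ x ∈ Ioo a b, g' x ∈ Icc 0 L) :
    (g a + g b) / 2 - (b - a)⁻¹ * ∫ x in a..b, g x ≤ L * (b - a) / 4 := by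
  have hlower : ∫ x in a..b, (g a + g b - L * (b - x)) / 2 ≤ ∫ x in a..b, g x :=
    integral_mono_on hab.le (Continuous.intervalIntegrable (by fun_prop) a b)
      (hg.intervalIntegrable_of_Icc hab.le) fun x hx ↦ by
        linarith [add_le_two_mul_add_mul_sub_of_hasDerivAt hg hg' hbound hx]
  have hcalc : ∫ x in a..b, (g a + g b - L * (b - x)) / 2
      = (b - a) * ((g a + g b) / 2 - L * (b - a) / 4) := by
    rw [integral_div, integral_sub intervalIntegrable_const
      (Continuous.intervalIntegrable (by fun_prop) a b),
      integral_const, integral_const_mul, integral_comp_sub_left (fun x ↦ x), integral_id,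
      smul_eq_mul]
    ring
  rw [hcalc] at hlower
  rw [sub_le_iff_le_add, ← sub_le_iff_le_add', inv_mul_eq_div, le_div_iff₀ (sub_pos.2 hab)]
  linarith

theorem mul_trapezoid_inequality_bound_general (f : ℝ → ℝ) (a b M : ℝ) (hab : a < b)
    (hpos : ∀ x ∈ Set.Icc a b, 0 < f x)
    (hdiff : ∀ x ∈ Set.Icc a b, DifferentiableAt ℝ f x)
    (hone : ∀ x ∈ Set.Icc a b, 1 ≤ Real.exp (deriv f x / f x))
    (hM : ∀ x ∈ Set.Icc a b, Real.exp (deriv f x / f x) ≤ M) :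
    Real.sqrt (f a * f b) * Real.exp ((1 / (a - b)) * ∫ u in a..b, Real.log (f u)) ≤
      M ^ ((b - a) / 4) := by
  have ha : a ∈ Icc a b := left_mem_Icc.2 hab.le
  have hb : b ∈ Icc a b := right_mem_Icc.2 hab.le
  have hM₀ : 0 < M := one_pos.trans_le ((hone a ha).trans (hM a ha))
  have hlog : ContinuousOn (fun x ↦ log (f x)) (Icc a b) := fun x hx ↦
    ((hdiff x hx).continuousAt.log (hpos x hx).ne').continuousWithinAt
  have hderiv : ∀ x ∈ Ioo a b, HasDerivAt (fun x ↦ log (f x)) (deriv f x / f x) x :=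
    fun x hx ↦ (hdiff x (Ioo_subset_Icc_self hx)).hasDerivAt.log
      (hpos x (Ioo_subset_Icc_self hx)).ne'
  have hbound : ∀ x ∈ Ioo a b, deriv f x / f x ∈ Icc 0 (log M) := fun x hx ↦
    ⟨one_le_exp_iff.1 (hone x (Ioo_subset_Icc_self hx)),
      (le_log_iff_exp_le hM₀).2 (hM x (Ioo_subset_Icc_self hx))⟩
  have hsqrt : √(f a * f b) = exp ((log (f a) + log (f b)) / 2) := by
    rw [← log_mul (hpos a ha).ne' (hpos b hb).ne', sqrt_eq_rpow, rpow_def_of_pos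
      (mul_pos (hpos a ha) (hpos b hb)), mul_one_div]
  rw [hsqrt, ← exp_add, rpow_def_of_pos hM₀, exp_le_exp, one_div, ← neg_sub b a, inv_neg,
    neg_mul, ← sub_eq_add_neg]
  linarith [trapezoid_sub_average_le_of_hasDerivAt hab hlog hderiv hbound]

/-- Trapezoid inequality with a uniform bound `M` on the multiplicative derivative. -/
theorem mul_trapezoid_inequality_bound (f : ℝ → ℝ) (a b M : ℝ) (hab : a < b)
    (hpos : ∀ x ∈ Set.Icc a b, 0 < f x)
    (hdiff : ∀ x ∈ Set.Icc a b, DifferentiableAt ℝ f x)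
    (hint : IntervalIntegrable (fun x => deriv f x / f x) MeasureTheory.volume a b)
    (hconv : ∀ x ∈ Set.Icc a b, ∀ y ∈ Set.Icc a b, ∀ t ∈ Set.Icc (0:ℝ) 1,
      Real.exp (deriv f (t * x + (1 - t) * y) / f (t * x + (1 - t) * y)) ≤
        Real.exp (deriv f x / f x) ^ t * Real.exp (deriv f y / f y) ^ (1 - t))
    (hone : ∀ x ∈ Set.Icc a b, 1 ≤ Real.exp (deriv f x / f x))
    (hM : ∀ x ∈ Set.Icc a b, Real.exp (deriv f x / f x) ≤ M) :
    Real.sqrt (f a * f b) * Real.exp ((1 / (a - b)) * ∫ u in a..b, Real.log (f u)) ≤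
      M ^ ((b - a) / 4) :=
  mul_trapezoid_inequality_bound_general f a b M hab hpos hdiff hone hM
end

section
/- For 0 < a < b and real p ≥ 2: e^{A^p(a,b) - L_p^p(a,b)} ≤ (e^{a^{p-1} + b^{p-1}})^{p(b-a)/8}, i.e. ((a+b)/2)^p - (b^{p+1}-a^{p+1})/((p+1)(b-a)) ≤ (p(b-a)/8)(a^{p-1} + b^{p-1}). -/
/-!
The left-hand side is in fact nonpositive: by the Hermite–Hadamard inequality (Jensen's inequality
for the uniform distribution on `[a, b]`), a convex function at the midpoint is at most its mean
value, and for the convex `t ↦ t ^ p` these are `A ^ p` and `L_p ^ p`. The right-hand side is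
nonnegative.
-/

open Real MeasureTheory Set

theorem interval_average_id {a b : ℝ} (hab : a ≠ b) : ⨍ x in a..b, x = (a + b) / 2 := by
  rw [interval_average_eq_div, integral_id]
  field_simp [sub_ne_zero.2 hab.symm]
  ring

theorem ConvexOn.map_midpoint_le_interval_average {f : ℝ → ℝ} {a b : ℝ} (hab : a < b)
    (hf : ConvexOn ℝ (Icc a b) f) (hfc : ContinuousOn f (Icc a b)) :
    f ((a + b) / 2) ≤ ⨍ x in a..b, f x := by
  rw [← interval_average_id hab.ne, uIoc_of_le hab.le]
  refine hf.map_set_average_le (f := fun x => x) hfc isClosed_Icc ?_ measure_Ioc_lt_top.ne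
    ((ae_restrict_mem measurableSet_Ioc).mono fun _ hx => Ioc_subset_Icc_self hx)
    (continuousOn_id.integrableOn_Icc.mono_set Ioc_subset_Icc_self)
    ((hfc.integrableOn_Icc).mono_set Ioc_subset_Icc_self)
  simp [hab]

/-- Application to special means: midpoint estimate for `f t = exp (t ^ p)`. -/
theorem special_means_midpoint (a b p : ℝ) (ha : 0 < a) (hab : a < b) (hp : 2 ≤ p) :
    ((a + b) / 2) ^ p - (b ^ (p + 1) - a ^ (p + 1)) / ((p + 1) * (b - a)) ≤
      (p * (b - a) / 8) * (a ^ (p - 1) + b ^ (p - 1)) := by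
  have hconvex : ConvexOn ℝ (Icc a b) fun x : ℝ => x ^ p :=
    (convexOn_rpow (by linarith)).subset (fun x hx => ha.le.trans hx.1) (convex_Icc a b)
  have hcont : ContinuousOn (fun x : ℝ => x ^ p) (Icc a b) :=
    continuousOn_id.rpow_const fun x hx => Or.inl (ha.trans_le hx.1).ne'
  have hermite_hadamard := hconvex.map_midpoint_le_interval_average hab hcont
  rw [interval_average_eq_div, integral_rpow (Or.inl (by linarith)), div_div] at hermite_hadamard
  have hrhs : 0 ≤ (p * (b - a) / 8) * (a ^ (p - 1) + b ^ (p - 1)) :=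
    mul_nonneg (by nlinarith) (add_nonneg (rpow_nonneg ha.le _) (rpow_nonneg (ha.trans hab).le _))
  linarith
end
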